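/- Let x₀ ∈ ℝ^d be nonzero with support T, C = { sgn(x₀) + u : supp u ∩ T = ∅, ‖u‖_∞ ≤ 1 }, (S_i)_{i=1}^k a partition of {1,…,d} such that T ∩ S_i ≠ ∅ for every i, Δ^v = diag(Σ_i v_i 1_{S_i}), g a standard Gaussian random vector in ℝ^d, and φ(v) = E[dist²(g, Δ^v C)]. Then φ is coercive on ℝ_+^k: for every K > 0 there exists R > 0 such that ‖v‖₂ ≥ R and v ∈ ℝ_+^k imply φ(v) ≥ K. -/

import Mathlib

open MeasureTheory ProbabilityTheory
open scoped Pointwise BigOperators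

noncomputable section

/-- The diagonal entries of `Δ^v = diag(∑ i, v i • 𝟏_{S i})`. -/
def blockWeight {d k : ℕ} (S : Fin k → Finset (Fin d)) (v : Fin k → ℝ) (j : Fin d) : ℝ :=
  ∑ i, if j ∈ S i then v i else 0

/-- The linear map given by the diagonal matrix `Δ^v`. -/
def deltaMap {d k : ℕ} (S : Fin k → Finset (Fin d)) (v : Fin k → ℝ)
    (p : EuclideanSpace ℝ (Fin d)) : EuclideanSpace ℝ (Fin d) :=
  WithLp.toLp 2 (fun j => blockWeight S v j * p j)

/-- The sign vector of `x₀` (with `sgn 0 = 0`). -/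
def sgnVec {d : ℕ} (x₀ : EuclideanSpace ℝ (Fin d)) : EuclideanSpace ℝ (Fin d) :=
  WithLp.toLp 2 (fun j => Real.sign (x₀ j))

/-- The subdifferential of the ℓ1-norm at `x₀`:
`C = { sgn x₀ + u : supp u ∩ supp x₀ = ∅, ‖u‖_∞ ≤ 1 }`. -/
def Cset {d : ℕ} (x₀ : EuclideanSpace ℝ (Fin d)) : Set (EuclideanSpace ℝ (Fin d)) :=
  {p | ∃ u : EuclideanSpace ℝ (Fin d),
    (∀ j, x₀ j ≠ 0 → u j = 0) ∧ (∀ j, |u j| ≤ 1) ∧ p = sgnVec x₀ + u}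

/-- The standard Gaussian measure on `EuclideanSpace ℝ (Fin d)`:
independent standard Gaussian coordinates. -/
def stdGaussianE (d : ℕ) : Measure (EuclideanSpace ℝ (Fin d)) :=
  (Measure.pi fun _ : Fin d => gaussianReal 0 1).map
    (MeasurableEquiv.toLp 2 (Fin d → ℝ))

/-- `phiE S x₀ v = E[dist²(g, Δ^v C)]` for a standard Gaussian vector `g`. -/
def phiE {d k : ℕ} (S : Fin k → Finset (Fin d)) (x₀ : EuclideanSpace ℝ (Fin d))
    (v : Fin k → ℝ) : ℝ :=
  ∫ g, Metric.infDist g (deltaMap S v '' Cset x₀) ^ 2 ∂(stdGaussianE d)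

/-! Pick a block `i` with `|v i| ≥ ‖v‖ / √k` and an index `j ∈ S i` in the support of `x₀`.
Every point of `Δ^v C` has `j`-th coordinate `± v i`, so on the event `|g j| ≤ 1` the distance
from `g` to `Δ^v C` is at least `|v i| - 1`. Hence `φ(v) ≥ P(|g j| ≤ 1) (|v i| - 1)²`, which
grows without bound with `‖v‖`. -/

open Metric Set

lemma blockWeight_eq_of_mem {d k : ℕ} {S : Fin k → Finset (Fin d)}
    (hdisj : ∀ i₁ i₂, i₁ ≠ i₂ → Disjoint (S i₁) (S i₂)) (v : Fin k → ℝ) {i : Fin k} {j : Fin d}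
    (hj : j ∈ S i) : blockWeight S v j = v i := by
  rw [blockWeight, Finset.sum_eq_single_of_mem i (Finset.mem_univ i), if_pos hj]
  intro i' _ hi'
  rw [if_neg (Finset.disjoint_left.1 (hdisj i i' hi'.symm) hj)]

lemma Cset_nonempty {d : ℕ} (x₀ : EuclideanSpace ℝ (Fin d)) : (Cset x₀).Nonempty :=
  ⟨sgnVec x₀, 0, fun _ _ => rfl, fun _ => by simp, by simp⟩

lemma abs_apply_eq_of_mem_deltaMap_image {d k : ℕ} {S : Fin k → Finset (Fin d)}
    {v : Fin k → ℝ} {x₀ a : EuclideanSpace ℝ (Fin d)} (ha : a ∈ deltaMap S v '' Cset x₀)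
    {j : Fin d} (hj : x₀ j ≠ 0) : |a j| = |blockWeight S v j| := by
  obtain ⟨_, ⟨u, hu, -, rfl⟩, rfl⟩ := ha
  have hsign : |Real.sign (x₀ j)| = 1 := by
    rcases Real.sign_apply_eq_of_ne_zero _ hj with h | h <;> simp [h]
  change |blockWeight S v j * (Real.sign (x₀ j) + u j)| = _
  rw [hu j hj, add_zero, abs_mul, hsign, mul_one]

lemma sub_abs_apply_le_infDist {ι : Type*} [Fintype ι] {A : Set (EuclideanSpace ℝ ι)}
    (hA : A.Nonempty) {r : ℝ} {j : ι} (h : ∀ a ∈ A, r ≤ |a j|) (g : EuclideanSpace ℝ ι) :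
    r - |g j| ≤ infDist g A := by
  refine (le_infDist hA).2 fun a ha => ?_
  calc r - |g j| ≤ |a j| - |g j| := by linarith [h a ha]
    _ ≤ |g j - a j| := by rw [abs_sub_comm]; exact abs_sub_abs_le_abs_sub _ _
    _ ≤ dist g a := PiLp.dist_apply_le g a j

lemma integrable_infDist_sq {E : Type*} [NormedAddCommGroup E] [MeasurableSpace E]
    [BorelSpace E] {μ : Measure E} [IsFiniteMeasure μ] (hμ : MemLp id 2 μ) (A : Set E) :
    Integrable (fun x => infDist x A ^ 2) μ := by
  have hbound : ∀ x, ‖infDist x A‖ ≤ ‖‖x‖ + infDist 0 A‖ := fun x => by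
    rw [Real.norm_of_nonneg infDist_nonneg,
      Real.norm_of_nonneg (add_nonneg (norm_nonneg x) infDist_nonneg)]
    simpa [add_comm] using infDist_le_infDist_add_dist (x := x) (y := 0) (s := A)
  exact ((hμ.norm.add (memLp_const _)).mono
    (continuous_infDist_pt A).aestronglyMeasurable (.of_forall hbound)).integrable_sq

lemma stdGaussianE_eq_stdGaussian (d : ℕ) :
    stdGaussianE d = stdGaussian (EuclideanSpace ℝ (Fin d)) :=
  map_pi_eq_stdGaussian

lemma measurePreserving_apply_stdGaussian {ι : Type*} [Fintype ι] (j : ι) :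
    MeasurePreserving (fun x : EuclideanSpace ℝ ι => x j) (stdGaussian (EuclideanSpace ℝ ι))
      (gaussianReal 0 1) := by
  classical
  simpa using measurePreserving_eval_multivariateGaussian (μ := 0) Matrix.PosSemidef.one (i := j)

lemma gaussianReal_real_Icc_pos : 0 < (gaussianReal 0 1).real (Icc (-1) 1) := by
  refine ENNReal.toReal_pos (fun h => ?_) (measure_ne_top _ _)
  have := gaussianReal_absolutelyContinuous' 0 one_ne_zero h
  norm_num [Real.volume_Icc] at this

lemma gaussianReal_real_Icc_mul_sq_le_phiE {d k : ℕ} {S : Fin k → Finset (Fin d)}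
    (hdisj : ∀ i₁ i₂, i₁ ≠ i₂ → Disjoint (S i₁) (S i₂)) {x₀ : EuclideanSpace ℝ (Fin d)}
    {v : Fin k → ℝ} {i : Fin k} {j : Fin d} (hjS : j ∈ S i) (hj : x₀ j ≠ 0) (hvi : 1 ≤ |v i|) :
    (gaussianReal 0 1).real (Icc (-1) 1) * (|v i| - 1) ^ 2 ≤ phiE S x₀ v := by
  set A := deltaMap S v '' Cset x₀
  have hA : ∀ a ∈ A, |v i| ≤ |a j| := fun a ha => by
    rw [abs_apply_eq_of_mem_deltaMap_image ha hj, blockWeight_eq_of_mem hdisj v hjS]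
  have hslab : (fun g : EuclideanSpace ℝ (Fin d) => g j) ⁻¹' Icc (-1) 1 ⊆
      {g | (|v i| - 1) ^ 2 ≤ infDist g A ^ 2} := fun g hg => by
    have hgj : |g j| ≤ 1 := abs_le.2 hg
    have := sub_abs_apply_le_infDist ((Cset_nonempty x₀).image _) hA g
    show (|v i| - 1) ^ 2 ≤ infDist g A ^ 2
    gcongr
    linarith
  rw [phiE, stdGaussianE_eq_stdGaussian]
  calc (gaussianReal 0 1).real (Icc (-1) 1) * (|v i| - 1) ^ 2
      = (|v i| - 1) ^ 2 *
          (stdGaussian _).real ((fun g : EuclideanSpace ℝ (Fin d) => g j) ⁻¹' Icc (-1) 1) := by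
        rw [(measurePreserving_apply_stdGaussian j).measureReal_preimage
          measurableSet_Icc.nullMeasurableSet, mul_comm]
    _ ≤ (|v i| - 1) ^ 2 * (stdGaussian _).real {g | (|v i| - 1) ^ 2 ≤ infDist g A ^ 2} :=
        mul_le_mul_of_nonneg_left (measureReal_mono hslab (measure_ne_top _ _)) (sq_nonneg _)
    _ ≤ _ := mul_meas_ge_le_integral_of_nonneg (.of_forall fun _ => sq_nonneg _)
        (integrable_infDist_sq IsGaussian.memLp_two_id A) _

lemma exists_sqrt_sum_sq_le {ι : Type*} [Fintype ι] [Nonempty ι] (v : ι → ℝ) :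
    ∃ i, √(∑ j, v j ^ 2) ≤ √(Fintype.card ι) * |v i| := by
  obtain ⟨i, hi⟩ := Finite.exists_max fun j => |v j|
  refine ⟨i, ?_⟩
  calc √(∑ j, v j ^ 2) ≤ √(∑ _j : ι, |v i| ^ 2) := Real.sqrt_le_sqrt <| Finset.sum_le_sum
        fun j _ => by simpa only [sq_abs] using pow_le_pow_left₀ (abs_nonneg _) (hi j) 2
    _ = √(Fintype.card ι) * |v i| := by
        rw [Finset.sum_const, Finset.card_univ, nsmul_eq_mul, Real.sqrt_mul (by positivity),
          Real.sqrt_sq (abs_nonneg _)]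

theorem expected_sq_dist_coercive_general {d k : ℕ}
    (x₀ : EuclideanSpace ℝ (Fin d))
    (S : Fin k → Finset (Fin d))
    (hdisj : ∀ i₁ i₂, i₁ ≠ i₂ → Disjoint (S i₁) (S i₂))
    (hTS : ∀ i, ∃ j ∈ S i, x₀ j ≠ 0) :
    ∀ K : ℝ, 0 < K → ∃ R : ℝ, 0 < R ∧
      ∀ v : Fin k → ℝ, (∀ i, 0 ≤ v i) → R ≤ Real.sqrt (∑ i, v i ^ 2) →
        K ≤ phiE S x₀ v := by
  intro K hK
  set c := (gaussianReal 0 1).real (Icc (-1) 1)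
  have hc : 0 < c := gaussianReal_real_Icc_pos
  set R := √k * (1 + √(K / c)) + 1
  have hRpos : 0 < R := by positivity
  refine ⟨R, hRpos, fun v _ hR => ?_⟩
  rcases isEmpty_or_nonempty (Fin k) with hk | hk
  · rw [Finset.univ_eq_empty, Finset.sum_empty, Real.sqrt_zero] at hR
    linarith
  obtain ⟨i, hi⟩ := exists_sqrt_sum_sq_le v
  rw [Fintype.card_fin] at hi
  obtain ⟨j, hjS, hj⟩ := hTS i
  have hvi : 1 + √(K / c) ≤ |v i| :=
    le_of_mul_le_mul_left (a := √k) (by linarith)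
      (Real.sqrt_pos.2 (Nat.cast_pos.2 (Fin.pos_iff_nonempty.2 hk)))
  calc K = c * √(K / c) ^ 2 := by rw [Real.sq_sqrt (by positivity)]; field_simp
    _ ≤ c * (|v i| - 1) ^ 2 := by gcongr; linarith
    _ ≤ phiE S x₀ v :=
      gaussianReal_real_Icc_mul_sq_le_phiE hdisj hjS hj (by linarith [Real.sqrt_nonneg (K / c)])

theorem expected_sq_dist_coercive {d k : ℕ}
    (x₀ : EuclideanSpace ℝ (Fin d)) (hx₀ : x₀ ≠ 0)
    (S : Fin k → Finset (Fin d))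
    (hdisj : ∀ i₁ i₂, i₁ ≠ i₂ → Disjoint (S i₁) (S i₂))
    (hcover : ∀ j, ∃ i, j ∈ S i)
    (hTS : ∀ i, ∃ j ∈ S i, x₀ j ≠ 0) :
    ∀ K : ℝ, 0 < K → ∃ R : ℝ, 0 < R ∧
      ∀ v : Fin k → ℝ, (∀ i, 0 ≤ v i) → R ≤ Real.sqrt (∑ i, v i ^ 2) →
        K ≤ phiE S x₀ v :=
  expected_sq_dist_coercive_general x₀ S hdisj hTS

end
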